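/- arXiv:2410.12151 — 10 statements merged into one kernel-verified Lean document; each statement's English description precedes it below -/
import Mathlib

section
/- Let W_r and W_k be square-integrable real random variables with mean 0 and variance 1, let σ_r > 0, σ_k > 0 be reals and α ∈ ℝ. If σ_k² > α² · σ_r², then the probability P( (W_r + δ/σ_r)² > (W_k + α·δ/σ_k)² ) tends to 1 as δ → ∞. -/
open MeasureTheory Filter

/-- Markov-type tail bound: for an `L¹` random variable `X` and `c > 0`,
`μ {X ≤ -cδ} → 0` as `δ → ∞`. -/
lemma tail_tendsto_zero_aux {Ω : Type*} [MeasurableSpace Ω] (μ : Measure Ω)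
    [IsProbabilityMeasure μ] {X : Ω → ℝ} (hX : MemLp X 1 μ) {c : ℝ} (hc : 0 < c) :
    Tendsto (fun δ : ℝ => μ {ω | X ω ≤ -(c * δ)}) atTop (nhds 0) := by
  have hK : eLpNorm X 1 μ ≠ ⊤ := hX.eLpNorm_ne_top
  have hbound : ∀ᶠ δ : ℝ in atTop,
      μ {ω | X ω ≤ -(c * δ)} ≤ (ENNReal.ofReal (c * δ))⁻¹ * eLpNorm X 1 μ := by
    filter_upwards [eventually_gt_atTop 0] with δ hδ
    have hcδ : 0 < c * δ := mul_pos hc hδ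
    have hsub : {ω | X ω ≤ -(c * δ)} ⊆ {ω | ENNReal.ofReal (c * δ) ≤ ‖X ω‖₊} := by
      intro ω hω
      have h1 : c * δ ≤ ‖X ω‖ := by
        have hω' : X ω ≤ -(c * δ) := hω
        rw [Real.norm_eq_abs, abs_of_nonpos (by linarith)]
        linarith
      show ENNReal.ofReal (c * δ) ≤ (‖X ω‖₊ : ENNReal)
      rw [← ENNReal.ofReal_coe_nnreal, coe_nnnorm]
      exact ENNReal.ofReal_le_ofReal h1
    calc μ {ω | X ω ≤ -(c * δ)} ≤ μ {ω | ENNReal.ofReal (c * δ) ≤ ‖X ω‖₊} :=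
          measure_mono hsub
      _ ≤ (ENNReal.ofReal (c * δ))⁻¹ ^ (1 : ENNReal).toReal *
            eLpNorm X 1 μ ^ (1 : ENNReal).toReal :=
          meas_ge_le_mul_pow_eLpNorm_enorm μ one_ne_zero ENNReal.one_ne_top
            hX.aestronglyMeasurable (by simp [ENNReal.ofReal_eq_zero, not_le, hcδ])
            (fun h => absurd h ENNReal.ofReal_ne_top)
      _ = (ENNReal.ofReal (c * δ))⁻¹ * eLpNorm X 1 μ := by simp
  have hlim : Tendsto (fun δ : ℝ => (ENNReal.ofReal (c * δ))⁻¹ * eLpNorm X 1 μ)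
      atTop (nhds 0) := by
    have h1 : Tendsto (fun δ : ℝ => ENNReal.ofReal (c * δ)) atTop (nhds ⊤) := by
      rw [ENNReal.tendsto_nhds_top_iff_nat]
      intro n
      filter_upwards [eventually_ge_atTop ((n + 1 : ℝ) / c)] with δ hδ
      have : (n : ℝ) < c * δ := by
        rw [div_le_iff₀ hc] at hδ; nlinarith
      calc (n : ENNReal) = ENNReal.ofReal (n : ℝ) := by simp
        _ < ENNReal.ofReal (c * δ) := by
          exact (ENNReal.ofReal_lt_ofReal_iff (lt_of_le_of_lt (Nat.cast_nonneg n) this)).2 this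
    have h2 : Tendsto (fun δ : ℝ => (ENNReal.ofReal (c * δ))⁻¹) atTop (nhds 0) := by
      simpa using (ENNReal.tendsto_inv_iff.2 h1)
    simpa using ENNReal.Tendsto.mul_const h2 (Or.inr hK)
  refine tendsto_of_tendsto_of_tendsto_of_le_of_le' tendsto_const_nhds hlim ?_ hbound
  filter_upwards with δ using zero_le

/-- Population version of Theorem 2.1(i): if `σk² > α² σr²`, then
`P((Wr + δ/σr)² > (Wk + αδ/σk)²) → 1` as `δ → ∞`. -/
theorem squared_zscore_root_cause_wins
    {Ω : Type*} [MeasurableSpace Ω] (μ : Measure Ω) [IsProbabilityMeasure μ]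
    (Wr Wk : Ω → ℝ)
    (hWr2 : MemLp Wr 2 μ) (hWk2 : MemLp Wk 2 μ)
    (hWr0 : ∫ ω, Wr ω ∂μ = 0) (hWk0 : ∫ ω, Wk ω ∂μ = 0)
    (hWr1 : ∫ ω, (Wr ω) ^ 2 ∂μ = 1) (hWk1 : ∫ ω, (Wk ω) ^ 2 ∂μ = 1)
    (σr σk : ℝ) (hσr : 0 < σr) (hσk : 0 < σk) (α : ℝ)
    (h : σk ^ 2 > α ^ 2 * σr ^ 2) :
    Tendsto (fun δ : ℝ =>
        μ {ω | (Wr ω + δ / σr) ^ 2 > (Wk ω + α * δ / σk) ^ 2})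
      atTop (nhds 1) := by
  set a : ℝ := σr⁻¹ with ha_def
  set b : ℝ := α / σk with hb_def
  have ha : 0 < a := inv_pos.2 hσr
  have hab2 : b ^ 2 < a ^ 2 := by
    rw [ha_def, hb_def, div_pow, inv_pow]
    rw [div_lt_iff₀ (by positivity), inv_mul_eq_div, lt_div_iff₀ (by positivity)]
    nlinarith
  have hamb : 0 < a - b := by nlinarith
  have hapb : 0 < a + b := by nlinarith
  have hX1 : MemLp (fun ω => Wr ω - Wk ω) 1 μ :=
    (hWr2.sub hWk2).mono_exponent one_le_two
  have hX2 : MemLp (fun ω => Wr ω + Wk ω) 1 μ :=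
    (hWr2.add hWk2).mono_exponent one_le_two
  have hA := tail_tendsto_zero_aux μ hX1 hamb
  have hB := tail_tendsto_zero_aux μ hX2 hapb
  have hlow : Tendsto (fun δ : ℝ =>
      (1 : ENNReal) - (μ {ω | Wr ω - Wk ω ≤ -((a - b) * δ)}
        + μ {ω | Wr ω + Wk ω ≤ -((a + b) * δ)})) atTop (nhds 1) := by
    have := ENNReal.Tendsto.sub (tendsto_const_nhds (x := (1 : ENNReal)))
      (hA.add hB) (Or.inl ENNReal.one_ne_top)
    simpa using this
  refine tendsto_of_tendsto_of_tendsto_of_le_of_le hlow tendsto_const_nhds ?_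
    (fun δ => prob_le_one)
  intro δ
  rw [tsub_le_iff_right]
  have hsub : (Set.univ : Set Ω) ⊆
      {ω | (Wr ω + δ / σr) ^ 2 > (Wk ω + α * δ / σk) ^ 2}
        ∪ ({ω | Wr ω - Wk ω ≤ -((a - b) * δ)} ∪ {ω | Wr ω + Wk ω ≤ -((a + b) * δ)}) := by
    intro ω _
    by_cases hev : (Wr ω + δ / σr) ^ 2 > (Wk ω + α * δ / σk) ^ 2
    · exact Or.inl hev
    · right
      have hδr : δ / σr = a * δ := by rw [ha_def]; ring
      have hδk : α * δ / σk = b * δ := by rw [hb_def]; ring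
      rw [hδr, hδk, not_lt] at hev
      by_contra hcon
      simp only [Set.mem_union, Set.mem_setOf_eq, not_or, not_le] at hcon
      obtain ⟨h1, h2⟩ := hcon
      have hu : 0 < Wr ω - Wk ω + (a - b) * δ := by linarith
      have hv : 0 < Wr ω + Wk ω + (a + b) * δ := by linarith
      nlinarith [mul_pos hu hv]
  calc (1 : ENNReal) = μ Set.univ := (measure_univ).symm
    _ ≤ μ ({ω | (Wr ω + δ / σr) ^ 2 > (Wk ω + α * δ / σk) ^ 2}
          ∪ ({ω | Wr ω - Wk ω ≤ -((a - b) * δ)} ∪ {ω | Wr ω + Wk ω ≤ -((a + b) * δ)})) :=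
        measure_mono hsub
    _ ≤ μ {ω | (Wr ω + δ / σr) ^ 2 > (Wk ω + α * δ / σk) ^ 2}
          + (μ {ω | Wr ω - Wk ω ≤ -((a - b) * δ)} + μ {ω | Wr ω + Wk ω ≤ -((a + b) * δ)}) :=
        le_trans (measure_union_le _ _) (by gcongr; exact measure_union_le _ _)
end

section
/- Let W_r and W_k be square-integrable real random variables with mean 0 and variance 1, let σ_r > 0, σ_k > 0 be reals and α ∈ ℝ. If σ_k² < α² · σ_r², then the probability P( (W_r + δ/σ_r)² < (W_k + α·δ/σ_k)² ) tends to 1 as δ → ∞. -/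
open MeasureTheory Filter
open scoped ENNReal

/-- Population version of Theorem 2.1(ii): if `σk² < α² σr²`, then
`P((Wr + δ/σr)² < (Wk + αδ/σk)²) → 1` as `δ → ∞`. -/
theorem squared_zscore_root_cause_loses
    {Ω : Type*} [MeasurableSpace Ω] (μ : Measure Ω) [IsProbabilityMeasure μ]
    (Wr Wk : Ω → ℝ)
    (hWr2 : MemLp Wr 2 μ) (hWk2 : MemLp Wk 2 μ)
    (hWr0 : ∫ ω, Wr ω ∂μ = 0) (hWk0 : ∫ ω, Wk ω ∂μ = 0)
    (hWr1 : ∫ ω, (Wr ω) ^ 2 ∂μ = 1) (hWk1 : ∫ ω, (Wk ω) ^ 2 ∂μ = 1)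
    (σr σk : ℝ) (hσr : 0 < σr) (hσk : 0 < σk) (α : ℝ)
    (h : σk ^ 2 < α ^ 2 * σr ^ 2) :
    Tendsto (fun δ : ℝ =>
        μ {ω | (Wr ω + δ / σr) ^ 2 < (Wk ω + α * δ / σk) ^ 2})
      atTop (nhds 1) := by
  -- basic inequalities
  have hσkα : σk < |α| * σr := by
    have h2 : σk ^ 2 < (|α| * σr) ^ 2 := by
      rw [mul_pow, sq_abs]; exact h
    exact lt_of_pow_lt_pow_left₀ 2 (by positivity) h2
  have hc : 0 < |α| / σk - 1 / σr := by
    have h1 : 1 / σr < |α| / σk := by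
      rw [div_lt_div_iff₀ hσr hσk]
      linarith
    linarith
  set c : ℝ := |α| / σk - 1 / σr with hc_def
  -- the absolute-sum function
  set f : Ω → ℝ := fun ω => |Wr ω| + |Wk ω| with hf_def
  have hf_nonneg : ∀ ω, 0 ≤ f ω := fun ω => by positivity
  have hf_int : Integrable f μ :=
    ((hWr2.integrable one_le_two).abs).add ((hWk2.integrable one_le_two).abs)
  have hf_aesm : AEMeasurable (fun ω => ENNReal.ofReal (f ω)) μ :=
    ENNReal.measurable_ofReal.comp_aemeasurable hf_int.aemeasurable
  set L : ℝ≥0∞ := ∫⁻ ω, ENNReal.ofReal (f ω) ∂μ with hL_def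
  have hL_lt_top : L ≠ ∞ := by
    have := hf_int.hasFiniteIntegral
    rw [HasFiniteIntegral] at this
    have heq : (∫⁻ ω, ENNReal.ofReal (f ω) ∂μ) = ∫⁻ ω, (‖f ω‖₊ : ℝ≥0∞) ∂μ := by
      refine lintegral_congr fun ω => ?_
      rw [← Real.enorm_eq_ofReal (hf_nonneg ω)]; rfl
    rw [hL_def, heq]
    exact this.ne
  -- pointwise inclusion for δ > 0
  have hincl : ∀ δ : ℝ, 0 < δ → ∀ ω : Ω, f ω < c * δ →
      (Wr ω + δ / σr) ^ 2 < (Wk ω + α * δ / σk) ^ 2 := by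
    intro δ hδ ω hω
    set x := Wr ω; set y := Wk ω
    have hq : |α * δ / σk| = |α| * δ / σk := by
      rw [abs_div, abs_mul, abs_of_pos hδ, abs_of_pos hσk]
    have hp : 0 ≤ δ / σr := by positivity
    have hkey : |x| + δ / σr < |α| * δ / σk - |y| := by
      have : |x| + |y| < (|α| / σk - 1 / σr) * δ := hω
      have e1 : (|α| / σk - 1 / σr) * δ = |α| * δ / σk - δ / σr := by ring
      linarith [this, e1 ▸ this]
    have h1 : (x + δ / σr) ^ 2 ≤ (|x| + δ / σr) ^ 2 := by
      rw [← sq_abs (x + δ / σr)]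
      refine pow_le_pow_left₀ (abs_nonneg _) ?_ 2
      calc |x + δ / σr| ≤ |x| + |δ / σr| := abs_add_le _ _
        _ = |x| + δ / σr := by rw [abs_of_nonneg hp]
    have h2 : (|x| + δ / σr) ^ 2 < (|α| * δ / σk - |y|) ^ 2 := by
      refine pow_lt_pow_left₀ hkey (by positivity) (by norm_num)
    have h3 : (|α| * δ / σk - |y|) ^ 2 ≤ (y + α * δ / σk) ^ 2 := by
      rw [← sq_abs (y + α * δ / σk)]
      have h' := abs_add_le (y + α * δ / σk) (-y)
      rw [show (y + α * δ / σk) + -y = α * δ / σk by ring, abs_neg] at h'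
      refine pow_le_pow_left₀ ?_ ?_ 2
      · have hx : 0 ≤ |x| := abs_nonneg x
        linarith
      · rw [← hq] at hkey ⊢
        linarith
    linarith
  -- Markov bound on the bad set
  have hmarkov : ∀ δ : ℝ, 0 < δ →
      μ {ω | c * δ ≤ f ω} ≤ L / ENNReal.ofReal (c * δ) := by
    intro δ hδ
    have hcδ : 0 < c * δ := by positivity
    have hsub : {ω | c * δ ≤ f ω} ⊆ {ω | ENNReal.ofReal (c * δ) ≤ ENNReal.ofReal (f ω)} := by
      intro ω hω
      exact ENNReal.ofReal_le_ofReal hω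
    calc μ {ω | c * δ ≤ f ω}
        ≤ μ {ω | ENNReal.ofReal (c * δ) ≤ ENNReal.ofReal (f ω)} := measure_mono hsub
      _ ≤ L / ENNReal.ofReal (c * δ) :=
          meas_ge_le_lintegral_div hf_aesm
            (ne_of_gt (ENNReal.ofReal_pos.mpr hcδ)) ENNReal.ofReal_ne_top
  -- μ of bad set tends to 0
  have hbad : Tendsto (fun δ : ℝ => μ {ω | c * δ ≤ f ω}) atTop (nhds 0) := by
    have hdiv : Tendsto (fun δ : ℝ => L / ENNReal.ofReal (c * δ)) atTop (nhds 0) := by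
      have h1 : Tendsto (fun δ : ℝ => ENNReal.ofReal (c * δ)) atTop (nhds ⊤) :=
        ENNReal.tendsto_ofReal_atTop.comp (tendsto_atTop_atTop_of_monotone
          (fun a b hab => mul_le_mul_of_nonneg_left hab hc.le) (fun b => ⟨max 1 (b / c), by
            have h2 : b / c ≤ max 1 (b / c) := le_max_right _ _
            calc b = c * (b / c) := by field_simp
              _ ≤ c * max 1 (b / c) := mul_le_mul_of_nonneg_left h2 hc.le⟩))
      have := ENNReal.Tendsto.const_div (a := L) h1 (Or.inr hL_lt_top)
      simpa [ENNReal.div_top] using this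
    refine tendsto_of_tendsto_of_tendsto_of_le_of_le' tendsto_const_nhds hdiv ?_ ?_
    · exact Eventually.of_forall fun δ => zero_le
    · filter_upwards [eventually_gt_atTop (0:ℝ)] with δ hδ
      exact hmarkov δ hδ
  -- lower bound for the event
  have hlow : ∀ᶠ δ : ℝ in atTop,
      1 - μ {ω | c * δ ≤ f ω} ≤ μ {ω | (Wr ω + δ / σr) ^ 2 < (Wk ω + α * δ / σk) ^ 2} := by
    filter_upwards [eventually_gt_atTop (0:ℝ)] with δ hδ
    have hsub : {ω | c * δ ≤ f ω}ᶜ ⊆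
        {ω | (Wr ω + δ / σr) ^ 2 < (Wk ω + α * δ / σk) ^ 2} := by
      intro ω hω
      exact hincl δ hδ ω (lt_of_not_ge hω)
    have h1 : (1 : ℝ≥0∞) ≤ μ {ω | c * δ ≤ f ω}ᶜ + μ {ω | c * δ ≤ f ω} := by
      calc (1 : ℝ≥0∞) = μ Set.univ := (measure_univ).symm
        _ = μ ({ω | c * δ ≤ f ω}ᶜ ∪ {ω | c * δ ≤ f ω}) := by rw [Set.compl_union_self]
        _ ≤ _ := measure_union_le _ _
    have h2 : μ {ω | c * δ ≤ f ω}ᶜ ≤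
        μ {ω | (Wr ω + δ / σr) ^ 2 < (Wk ω + α * δ / σk) ^ 2} := measure_mono hsub
    calc 1 - μ {ω | c * δ ≤ f ω} ≤ μ {ω | c * δ ≤ f ω}ᶜ := by
          rw [tsub_le_iff_right]; exact h1
      _ ≤ _ := h2
  -- squeeze
  have hlim : Tendsto (fun δ : ℝ => (1 : ℝ≥0∞) - μ {ω | c * δ ≤ f ω}) atTop (nhds 1) := by
    have := ENNReal.Tendsto.sub (tendsto_const_nhds (x := (1:ℝ≥0∞))) hbad (Or.inl ENNReal.one_ne_top)
    simpa using this
  refine tendsto_of_tendsto_of_tendsto_of_le_of_le' hlim tendsto_const_nhds hlow ?_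
  exact Eventually.of_forall fun δ => prob_le_one
end

section
/- Let B be a strictly lower triangular real p×p matrix, let D be a diagonal p×p matrix with strictly positive diagonal entries, set M = (I − B)⁻¹ and Σ = M · D · Mᵀ. Let r and k be distinct indices. If either (i) M_{kr} = 0, or (ii) r < k and M_{kj} = M_{kr} · M_{rj} for every index j < r, then Σ_{kk} > M_{kr}² · Σ_{rr}. -/
/-!
Since `D` is diagonal, `Σ i i = ∑ j, M i j ^ 2 * D j j`, so it suffices to compare the two
sums termwise. `M` is unit lower triangular, hence either hypothesis gives
`(M k r * M r j) ^ 2 ≤ M k j ^ 2` for every `j`, and the term `j = k` is strict because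
`M k r * M r k = 0` while `M k k = 1`.
-/

open Matrix

namespace Matrix

variable {n R : Type*}

theorem IsLowerTriangular.mul_apply_self [Fintype n] [LinearOrder n]
    [NonUnitalNonAssocSemiring R] {A C : Matrix n n R} (hA : A.IsLowerTriangular)
    (hC : C.IsLowerTriangular) (i : n) :
    (A * C) i i = A i i * C i i := by
  rw [mul_apply, Finset.sum_eq_single i]
  · intro j _ hji
    rcases hji.lt_or_gt with hj | hj
    · rw [hC (OrderDual.toDual_lt_toDual.mpr hj), mul_zero]
    · rw [hA (OrderDual.toDual_lt_toDual.mpr hj), zero_mul]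
  · exact fun h => absurd (Finset.mem_univ i) h

theorem mul_diagonal_mul_transpose_apply_self [Fintype n] [DecidableEq n] [CommSemiring R]
    (M : Matrix n n R) (d : n → R) (i : n) :
    (M * diagonal d * Mᵀ) i i = ∑ j, M i j ^ 2 * d j := by
  rw [mul_apply]
  simp only [mul_diagonal, transpose_apply]
  exact Finset.sum_congr rfl fun j _ => by ring

section StrictlyLowerTriangular

variable [LinearOrder n] [DecidableEq n] [CommRing R] {B : Matrix n n R}

theorem isLowerTriangular_one_sub (hB : ∀ i j, i ≤ j → B i j = 0) :
    (1 - B).IsLowerTriangular :=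
  blockTriangular_one.sub fun i j (hij : i < j) => hB i j hij.le

theorem one_sub_apply_self (hB : ∀ i j, i ≤ j → B i j = 0) (i : n) : (1 - B) i i = 1 := by
  simp [hB i i le_rfl]

theorem det_one_sub [Fintype n] (hB : ∀ i j, i ≤ j → B i j = 0) : (1 - B).det = 1 := by
  simp [det_of_isLowerTriangular _ (isLowerTriangular_one_sub hB), one_sub_apply_self hB]

theorem isLowerTriangular_inv_one_sub [Fintype n] (hB : ∀ i j, i ≤ j → B i j = 0) :
    ((1 - B)⁻¹).IsLowerTriangular :=
  have : Invertible (1 - B) := invertibleOfIsUnitDet _ (by simp [det_one_sub hB])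
  blockTriangular_inv_of_blockTriangular (isLowerTriangular_one_sub hB)

theorem inv_one_sub_apply_self [Fintype n] (hB : ∀ i j, i ≤ j → B i j = 0) (i : n) :
    (1 - B)⁻¹ i i = 1 := by
  have hinv : ((1 - B)⁻¹ * (1 - B)) i i = 1 := by
    rw [nonsing_inv_mul _ (by simp [det_one_sub hB]), one_apply_eq]
  rwa [(isLowerTriangular_inv_one_sub hB).mul_apply_self (isLowerTriangular_one_sub hB),
    one_sub_apply_self hB, mul_one] at hinv

end StrictlyLowerTriangular

section Ordered

variable [CommRing R] [LinearOrder R] [IsStrictOrderedRing R]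

theorem sq_mul_mul_diagonal_mul_transpose_apply_lt [Fintype n] [DecidableEq n]
    (M : Matrix n n R) {d : n → R} (hd : ∀ j, 0 < d j) {c : R} {i k : n}
    (hle : ∀ j, (c * M i j) ^ 2 ≤ M k j ^ 2) (hlt : ∃ j, (c * M i j) ^ 2 < M k j ^ 2) :
    c ^ 2 * (M * diagonal d * Mᵀ) i i < (M * diagonal d * Mᵀ) k k := by
  rw [mul_diagonal_mul_transpose_apply_self, mul_diagonal_mul_transpose_apply_self,
    Finset.mul_sum]
  obtain ⟨j₀, hj₀⟩ := hlt
  refine Finset.sum_lt_sum (fun j _ => ?_) ⟨j₀, Finset.mem_univ _, ?_⟩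
  · rw [← mul_assoc, ← mul_pow]
    exact mul_le_mul_of_nonneg_right (hle j) (hd j).le
  · rw [← mul_assoc, ← mul_pow]
    exact mul_lt_mul_of_pos_right hj₀ (hd j₀)

theorem sq_mul_le_sq_of_no_bypass [LinearOrder n] {M : Matrix n n R}
    (hM : M.IsLowerTriangular) (hdiag : ∀ i, M i i = 1) {r k : n}
    (hcond : M k r = 0 ∨ (r < k ∧ ∀ j, j < r → M k j = M k r * M r j)) (j : n) :
    (M k r * M r j) ^ 2 ≤ M k j ^ 2 := by
  rcases hcond with hkr | ⟨-, hfac⟩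
  · rw [hkr, zero_mul, sq, zero_mul]
    exact sq_nonneg _
  · rcases lt_trichotomy j r with hj | rfl | hj
    · rw [hfac j hj]
    · rw [hdiag, mul_one]
    · rw [hM (OrderDual.toDual_lt_toDual.mpr hj), mul_zero, sq, zero_mul]
      exact sq_nonneg _

end Ordered

end Matrix

theorem variance_gt_of_no_bypass_general
    {p : ℕ} (B D : Matrix (Fin p) (Fin p) ℝ)
    (hB : ∀ i j : Fin p, i ≤ j → B i j = 0)
    (hDdiag : ∀ i j : Fin p, i ≠ j → D i j = 0)
    (hDpos : ∀ i : Fin p, 0 < D i i)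
    (M : Matrix (Fin p) (Fin p) ℝ) (hM : M = (1 - B)⁻¹)
    (S : Matrix (Fin p) (Fin p) ℝ) (hS : S = M * D * Mᵀ)
    (r k : Fin p)
    (hcond : M k r = 0 ∨
      (r < k ∧ ∀ j : Fin p, j < r → M k j = M k r * M r j)) :
    S k k > (M k r) ^ 2 * S r r := by
  have hlow : M.IsLowerTriangular := hM ▸ isLowerTriangular_inv_one_sub hB
  have hunit : ∀ i, M i i = 1 := fun i => hM ▸ inv_one_sub_apply_self hB i
  have hD : D = diagonal D.diag := ((isDiag_iff_diagonal_diag D).mp hDdiag).symm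
  have hbypass : M k r * M r k = 0 := by
    rcases hcond with hkr | ⟨hrk, -⟩
    · rw [hkr, zero_mul]
    · rw [hlow (OrderDual.toDual_lt_toDual.mpr hrk), mul_zero]
  rw [hS, hD]
  refine sq_mul_mul_diagonal_mul_transpose_apply_lt M hDpos
    (sq_mul_le_sq_of_no_bypass hlow hunit hcond) ⟨k, ?_⟩
  rw [hbypass, hunit]
  norm_num

/-- Proposition 2 of the paper in matrix form.  `B` is strictly lower triangular
(so the variables are sorted by a causal ordering), `D` is the diagonal error
covariance, `M = (I - B)⁻¹` and `Σ = M D Mᵀ`.  If either `k` is not a descendant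
of `r` (i.e. `M k r = 0`), or `r < k` and every causal effect of an earlier
variable `j` on `k` factors through `r` (i.e. `M k j = M k r * M r j` for all
`j < r`), then `Σ k k > (M k r)² * Σ r r`. -/
theorem variance_gt_of_no_bypass
    {p : ℕ} (B D : Matrix (Fin p) (Fin p) ℝ)
    (hB : ∀ i j : Fin p, i ≤ j → B i j = 0)
    (hDdiag : ∀ i j : Fin p, i ≠ j → D i j = 0)
    (hDpos : ∀ i : Fin p, 0 < D i i)
    (M : Matrix (Fin p) (Fin p) ℝ) (hM : M = (1 - B)⁻¹)
    (S : Matrix (Fin p) (Fin p) ℝ) (hS : S = M * D * Mᵀ)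
    (r k : Fin p) (hrk : r ≠ k)
    (hcond : M k r = 0 ∨
      (r < k ∧ ∀ j : Fin p, j < r → M k j = M k r * M r j)) :
    S k k > (M k r) ^ 2 * S r r :=
  variance_gt_of_no_bypass_general B D hB hDdiag hDpos M hM S hS r k hcond
end

section
/- Let B be a strictly lower triangular real p×p matrix all of whose entries are nonnegative, let D be a diagonal p×p matrix with strictly positive diagonal entries, set M = (I − B)⁻¹ and Σ = M · D · Mᵀ. Then for every pair of distinct indices r and k one has Σ_{kk} > M_{kr}² · Σ_{rr}. -/
/-!
Since `D` is diagonal, `Σ k k = ∑ j, D j j * M k j ^ 2`. Total effects multiply along a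
mediator: `M k r * M r j ≤ M k j`, because with nonnegative weights the paths from `j` to `k`
through `r` contribute only part of `M k j`. Hence `Σ k k ≥ M k r ^ 2 * Σ r r` termwise, and the
term `j = k` is strict: `M k k = 1` while `M k r * M r k = 0` by triangularity.
-/

open Matrix Finset

namespace Matrix

theorem mul_mul_transpose_apply_self_of_isDiag {n R : Type*} [Fintype n] [CommSemiring R]
    {D : Matrix n n R} (hD : D.IsDiag) (M : Matrix n n R) (k : n) :
    (M * D * Mᵀ) k k = ∑ j, D j j * M k j ^ 2 := by
  rw [mul_apply]
  refine sum_congr rfl fun j _ => ?_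
  rw [mul_apply, sum_eq_single j (fun i _ hij => by rw [hD hij, mul_zero]) (by simp),
    transpose_apply]
  ring

variable {n R : Type*} [Fintype n] [LinearOrder n]

/-- `M = 1 + B M` is the first-step decomposition of path sums in the DAG with edge weights `B`
(`B k i` the weight of `i → k`, vertices ordered topologically): `M k j` is then the total effect
of `j` on `k`. -/
structure IsTotalEffect [Semiring R] (B M : Matrix n n R) : Prop where
  strictLower : ∀ i j, i ≤ j → B i j = 0
  eq_one_add_mul : M = 1 + B * M

theorem isTotalEffect_inv_one_sub [CommRing R] {B : Matrix n n R}
    (hB : ∀ i j, i ≤ j → B i j = 0) : IsTotalEffect B (1 - B)⁻¹ := by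
  have hlower : (1 - B).IsLowerTriangular := fun i j (hij : i < j) => by
    simp [sub_apply, one_apply_ne hij.ne, hB i j hij.le]
  have hdet : (1 - B).det = 1 := by
    simp [det_of_isLowerTriangular _ hlower, sub_apply, hB _ _ le_rfl]
  refine ⟨hB, ?_⟩
  have hinv := mul_nonsing_inv (1 - B) (hdet ▸ isUnit_one)
  rw [sub_mul, one_mul] at hinv
  exact eq_add_of_sub_eq hinv

namespace IsTotalEffect

variable [Semiring R] {B M : Matrix n n R}

theorem apply_eq (h : IsTotalEffect B M) (k j : n) :
    M k j = (1 : Matrix n n R) k j + ∑ i with i < k, B k i * M i j := by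
  conv_lhs => rw [h.eq_one_add_mul]
  rw [add_apply, mul_apply, sum_filter]
  refine congrArg _ (sum_congr rfl fun i _ => ?_)
  split_ifs with hik
  · rfl
  · rw [h.strictLower k i (not_lt.1 hik), zero_mul]

theorem apply_eq_zero_of_lt (h : IsTotalEffect B M) {k j : n} (hkj : k < j) : M k j = 0 := by
  induction k using WellFoundedLT.induction generalizing j with
  | _ k ih =>
    rw [h.apply_eq, one_apply_ne hkj.ne, zero_add]
    refine sum_eq_zero fun i hi => ?_
    have hik : i < k := (mem_filter.1 hi).2
    rw [ih i hik (hik.trans hkj), mul_zero]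

theorem apply_self (h : IsTotalEffect B M) (k : n) : M k k = 1 := by
  rw [h.apply_eq, one_apply_eq, sum_eq_zero fun i hi => ?_, add_zero]
  rw [h.apply_eq_zero_of_lt (mem_filter.1 hi).2, mul_zero]

theorem apply_mul_apply_eq_zero (h : IsTotalEffect B M) {r k : n} (hrk : r ≠ k) :
    M k r * M r k = 0 := by
  rcases hrk.lt_or_gt with hlt | hgt
  · rw [h.apply_eq_zero_of_lt hlt, mul_zero]
  · rw [h.apply_eq_zero_of_lt hgt, zero_mul]

variable [PartialOrder R] [IsOrderedRing R]

theorem nonneg (h : IsTotalEffect B M) (hB : ∀ i j, 0 ≤ B i j) (k j : n) : 0 ≤ M k j := by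
  induction k using WellFoundedLT.induction with
  | _ k ih =>
    rw [h.apply_eq]
    exact add_nonneg (by rw [one_apply]; split_ifs <;> simp)
      (sum_nonneg fun i hi => mul_nonneg (hB k i) (ih i (mem_filter.1 hi).2))

/-- Every path from `j` to `k` through `r` is a path from `j` to `k`. -/
theorem apply_mul_apply_le (h : IsTotalEffect B M) (hB : ∀ i j, 0 ≤ B i j) (k r j : n) :
    M k r * M r j ≤ M k j := by
  induction k using WellFoundedLT.induction with
  | _ k ih =>
    rcases eq_or_ne k r with rfl | hkr
    · rw [h.apply_self, one_mul]
    calc M k r * M r j = ∑ i with i < k, B k i * (M i r * M r j) := by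
          rw [h.apply_eq k r, one_apply_ne hkr, zero_add, sum_mul]
          simp only [mul_assoc]
      _ ≤ ∑ i with i < k, B k i * M i j :=
          sum_le_sum fun i hi => mul_le_mul_of_nonneg_left (ih i (mem_filter.1 hi).2) (hB k i)
      _ ≤ M k j := by
          rw [h.apply_eq k j]
          exact le_add_of_nonneg_left (by rw [one_apply]; split_ifs <;> simp)

end IsTotalEffect

end Matrix

/-- Proposition 3 of the paper in matrix form: if the strictly lower triangular
edge-weight matrix `B` has nonnegative entries, `D` is the positive diagonal
error covariance, `M = (I - B)⁻¹` and `Σ = M D Mᵀ`, then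
`Σ k k > (M k r)² * Σ r r` for all distinct indices `r, k`. -/
theorem variance_gt_of_nonneg_weights
    {p : ℕ} (B D : Matrix (Fin p) (Fin p) ℝ)
    (hB : ∀ i j : Fin p, i ≤ j → B i j = 0)
    (hBnn : ∀ i j : Fin p, 0 ≤ B i j)
    (hDdiag : ∀ i j : Fin p, i ≠ j → D i j = 0)
    (hDpos : ∀ i : Fin p, 0 < D i i)
    (M : Matrix (Fin p) (Fin p) ℝ) (hM : M = (1 - B)⁻¹)
    (S : Matrix (Fin p) (Fin p) ℝ) (hS : S = M * D * Mᵀ) :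
    ∀ r k : Fin p, r ≠ k → S k k > (M k r) ^ 2 * S r r := by
  intro r k hrk
  have hTE : IsTotalEffect B M := hM ▸ isTotalEffect_inv_one_sub hB
  have hSdiag := mul_mul_transpose_apply_self_of_isDiag hDdiag M
  rw [hS, gt_iff_lt, hSdiag, hSdiag, mul_sum]
  refine sum_lt_sum (fun j _ => ?_) ⟨k, mem_univ k, ?_⟩
  · calc M k r ^ 2 * (D j j * M r j ^ 2) = D j j * (M k r * M r j) ^ 2 := by ring
      _ ≤ D j j * M k j ^ 2 := by
          gcongr
          · exact (hDpos j).le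
          · exact mul_nonneg (hTE.nonneg hBnn k r) (hTE.nonneg hBnn r j)
          · exact hTE.apply_mul_apply_le hBnn k r j
  · calc M k r ^ 2 * (D k k * M r k ^ 2) = D k k * (M k r * M r k) ^ 2 := by ring
      _ < D k k * M k k ^ 2 := by
          rw [hTE.apply_mul_apply_eq_zero hrk, hTE.apply_self]
          simpa using hDpos k
end

section
/- Let B be a strictly lower triangular real p×p matrix all of whose entries are nonnegative, and set M = (I − B)⁻¹. Then every entry of M is nonnegative, and for any three pairwise distinct indices j, r, k one has M_{kj} ≥ M_{kr} · M_{rj}. -/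
/-!
Since `B` is strictly lower triangular, `det (1 - B) = 1` and `M = (1 - B)⁻¹` satisfies
`M = 1 + B * M`, i.e. `M k j = δ k j + ∑_{s < k} B k s * M s j`. Strong induction on the row `k`
along this recursion shows that `M` is unitriangular with nonnegative entries, and that
`M k r * M r j ≤ M k j` for all `j, r, k`: for `r < k`, expand
`M k r` by the recursion and apply the induction hypothesis to each row `s < k`.
-/

namespace Matrix

variable {n R : Type*} [Fintype n] [LinearOrder n]

def IsStrictLowerTriangular [Zero R] (B : Matrix n n R) : Prop :=
  ∀ i j, i ≤ j → B i j = 0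

namespace IsStrictLowerTriangular

theorem det_one_sub [CommRing R] {B : Matrix n n R} (hB : B.IsStrictLowerTriangular) :
    (1 - B).det = 1 := by
  have hlower : (1 - B).IsLowerTriangular := fun i j (hij : i < j) => by
    simp [one_apply_ne (ne_of_lt hij), hB i j (le_of_lt hij)]
  rw [det_of_isLowerTriangular _ hlower]
  simp [hB _ _ le_rfl]

theorem inv_one_sub_eq_one_add_mul [CommRing R] {B : Matrix n n R}
    (hB : B.IsStrictLowerTriangular) : (1 - B)⁻¹ = 1 + B * (1 - B)⁻¹ := by
  have hinv : (1 - B) * (1 - B)⁻¹ = 1 := mul_nonsing_inv _ (by simp [hB.det_one_sub])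
  rwa [sub_mul, one_mul, sub_eq_iff_eq_add] at hinv

section Recursion

variable [Ring R] {B M : Matrix n n R}

theorem apply_eq_one_apply_add_sum (hM : M = 1 + B * M) (k j : n) :
    M k j = (1 : Matrix n n R) k j + ∑ s, B k s * M s j := by
  rw [← mul_apply, ← add_apply, ← hM]

theorem apply_eq_zero_of_lt (hB : B.IsStrictLowerTriangular) (hM : M = 1 + B * M) {k j : n}
    (hkj : k < j) : M k j = 0 := by
  induction k using WellFoundedLT.induction generalizing j with
  | ind k ih =>
    rw [apply_eq_one_apply_add_sum hM, one_apply_ne (ne_of_lt hkj), zero_add]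
    refine Finset.sum_eq_zero fun s _ => ?_
    rcases le_or_gt k s with hks | hsk
    · rw [hB k s hks, zero_mul]
    · rw [ih s hsk (hsk.trans hkj), mul_zero]

theorem apply_self (hB : B.IsStrictLowerTriangular) (hM : M = 1 + B * M) (k : n) :
    M k k = 1 := by
  rw [apply_eq_one_apply_add_sum hM, one_apply_eq, add_eq_left]
  refine Finset.sum_eq_zero fun s _ => ?_
  rcases le_or_gt k s with hks | hsk
  · rw [hB k s hks, zero_mul]
  · rw [apply_eq_zero_of_lt hB hM hsk, mul_zero]

variable [PartialOrder R] [IsOrderedRing R]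

theorem apply_nonneg (hB : B.IsStrictLowerTriangular) (hBnn : ∀ i j, 0 ≤ B i j)
    (hM : M = 1 + B * M) (k j : n) : 0 ≤ M k j := by
  induction k using WellFoundedLT.induction generalizing j with
  | ind k ih =>
    rw [apply_eq_one_apply_add_sum hM]
    refine add_nonneg (by rw [one_apply]; split_ifs <;> simp) (Finset.sum_nonneg fun s _ => ?_)
    rcases le_or_gt k s with hks | hsk
    · rw [hB k s hks, zero_mul]
    · exact mul_nonneg (hBnn k s) (ih s hsk j)

theorem mul_apply_le (hB : B.IsStrictLowerTriangular) (hBnn : ∀ i j, 0 ≤ B i j)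
    (hM : M = 1 + B * M) (k r j : n) : M k r * M r j ≤ M k j := by
  induction k using WellFoundedLT.induction generalizing j with
  | ind k ih =>
    rcases lt_trichotomy k r with hkr | rfl | hrk
    · rw [apply_eq_zero_of_lt hB hM hkr, zero_mul]
      exact apply_nonneg hB hBnn hM k j
    · rw [apply_self hB hM, one_mul]
    have hterm : ∀ s, B k s * M s r * M r j ≤ B k s * M s j := fun s => by
      rcases le_or_gt k s with hks | hsk
      · simp [hB k s hks]
      · rw [mul_assoc]
        exact mul_le_mul_of_nonneg_left (ih s hsk j) (hBnn k s)
    calc M k r * M r j = ∑ s, B k s * M s r * M r j := by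
          rw [apply_eq_one_apply_add_sum hM k r, one_apply_ne (ne_of_gt hrk), zero_add, Finset.sum_mul]
      _ ≤ ∑ s, B k s * M s j := Finset.sum_le_sum fun s _ => hterm s
      _ ≤ M k j := by
          rw [apply_eq_one_apply_add_sum hM k j, le_add_iff_nonneg_left, one_apply]
          split_ifs <;> simp

end Recursion

end IsStrictLowerTriangular

end Matrix

/-- Path-counting inequality used in the proof of Proposition 3 of the paper:
if the strictly lower triangular matrix `B` has nonnegative entries and
`M = (I - B)⁻¹`, then every entry of `M` is nonnegative and, for pairwise
distinct indices `j, r, k`, the total effect `M k j` dominates the part of the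
effect flowing through `r`, namely `M k j ≥ M k r * M r j`. -/
theorem total_effect_dominates_through_effect
    {p : ℕ} (B : Matrix (Fin p) (Fin p) ℝ)
    (hB : ∀ i j : Fin p, i ≤ j → B i j = 0)
    (hBnn : ∀ i j : Fin p, 0 ≤ B i j)
    (M : Matrix (Fin p) (Fin p) ℝ) (hM : M = (1 - B)⁻¹) :
    (∀ i j : Fin p, 0 ≤ M i j) ∧
    (∀ j r k : Fin p, j ≠ r → r ≠ k → j ≠ k → M k j ≥ M k r * M r j) := by
  have hstrict : B.IsStrictLowerTriangular := hB
  have hrec : M = 1 + B * M := hM ▸ hstrict.inv_one_sub_eq_one_add_mul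
  exact ⟨hstrict.apply_nonneg hBnn hrec,
    fun j r k _ _ _ => hstrict.mul_apply_le hBnn hrec k r j⟩
end

section
/- Let A be an invertible real p×p matrix such that P A Pᵀ is lower triangular for some permutation matrix P, and let L be a lower triangular matrix with strictly positive diagonal entries satisfying L Lᵀ = A Aᵀ. Fix an index j. If the j-th column of L⁻¹ A has exactly one nonzero entry, then that nonzero entry is in the j-th position of the column (i.e., (L⁻¹ A)_{jj} ≠ 0 and (L⁻¹ A)_{ij} = 0 for all i ≠ j). -/
open Matrix

/-- Lemma C.1 of the paper.  `A` is invertible and becomes lower triangular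
after permuting rows and columns by `σ`; `L` is the lower triangular Cholesky
factor (with positive diagonal) of `A Aᵀ`.  If the `j`-th column of `L⁻¹ A` has
exactly one nonzero entry, then that entry is in the `j`-th position. -/
theorem single_nonzero_entry_on_diagonal
    {p : ℕ} (A L : Matrix (Fin p) (Fin p) ℝ)
    (hA : IsUnit A)
    (σ : Equiv.Perm (Fin p))
    (htri : ∀ i j : Fin p, i < j → A (σ i) (σ j) = 0)
    (hLtri : ∀ i j : Fin p, i < j → L i j = 0)
    (hLdiag : ∀ i : Fin p, 0 < L i i)
    (hLL : L * Lᵀ = A * Aᵀ)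
    (j : Fin p)
    (hone : ∃! i : Fin p, (L⁻¹ * A) i j ≠ 0) :
    (L⁻¹ * A) j j ≠ 0 ∧ ∀ i : Fin p, i ≠ j → (L⁻¹ * A) i j = 0 := by
  classical
  obtain ⟨i, hi, huniq⟩ := hone
  have hzero : ∀ k : Fin p, k ≠ i → (L⁻¹ * A) k j = 0 := by
    intro k hk
    by_contra h
    exact hk (huniq k h)
  -- L is lower triangular (in mathlib's BlockTriangular sense)
  have hLblk : L.BlockTriangular OrderDual.toDual := fun a b hab => hLtri a b hab
  have hLdet : IsUnit L.det := by
    rw [Matrix.det_of_lowerTriangular L hLblk]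
    exact (Finset.prod_pos fun k _ => hLdiag k).ne'.isUnit
  haveI : Invertible L := L.invertibleOfIsUnitDet hLdet
  have hLinvblk : L⁻¹.BlockTriangular OrderDual.toDual :=
    blockTriangular_inv_of_blockTriangular hLblk
  have hLinvdiag : ∀ k : Fin p, L⁻¹ k k ≠ 0 := by
    intro k
    have hdet : L⁻¹.det ≠ 0 := by
      rw [Matrix.det_nonsing_inv]
      exact (isUnit_ringInverse.mpr hLdet).ne_zero
    rw [Matrix.det_of_lowerTriangular L⁻¹ hLinvblk] at hdet
    exact fun h => hdet (Finset.prod_eq_zero (Finset.mem_univ k) h)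
  -- A i j ≠ 0
  have hAij : A i j ≠ 0 := by
    have hLA : L * (L⁻¹ * A) = A := Matrix.mul_nonsing_inv_cancel_left L A hLdet
    have : A i j = L i i * (L⁻¹ * A) i j := by
      conv_lhs => rw [← hLA]
      rw [Matrix.mul_apply]
      exact Finset.sum_eq_single i (fun m _ hm => by rw [hzero m hm, mul_zero])
        (fun h => absurd (Finset.mem_univ i) h)
    rw [this]
    exact mul_ne_zero (hLdiag i).ne' hi
  -- Q := L⁻¹ * A is orthogonal, hence A⁻¹ = Qᵀ * L⁻¹
  have hQorth : (L⁻¹ * A) * (L⁻¹ * A)ᵀ = 1 := by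
    rw [Matrix.transpose_mul, Matrix.transpose_nonsing_inv]
    calc L⁻¹ * A * (Aᵀ * Lᵀ⁻¹) = L⁻¹ * (A * Aᵀ) * Lᵀ⁻¹ := by
          simp only [Matrix.mul_assoc]
      _ = L⁻¹ * (L * Lᵀ) * Lᵀ⁻¹ := by rw [hLL]
      _ = L⁻¹ * L * (Lᵀ * Lᵀ⁻¹) := by simp only [Matrix.mul_assoc]
      _ = 1 := by
          rw [Matrix.nonsing_inv_mul L hLdet, Matrix.mul_nonsing_inv Lᵀ
            (by rwa [Matrix.det_transpose])]
          simp
  have hAinv : A⁻¹ = (L⁻¹ * A)ᵀ * L⁻¹ := by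
    apply Matrix.inv_eq_right_inv
    calc A * ((L⁻¹ * A)ᵀ * L⁻¹) = (L * (L⁻¹ * A)) * ((L⁻¹ * A)ᵀ * L⁻¹) := by
          rw [Matrix.mul_nonsing_inv_cancel_left L A hLdet]
      _ = L * ((L⁻¹ * A) * (L⁻¹ * A)ᵀ) * L⁻¹ := by simp only [Matrix.mul_assoc]
      _ = 1 := by rw [hQorth, Matrix.mul_one, Matrix.mul_nonsing_inv L hLdet]
  -- (A⁻¹) j i ≠ 0
  have hAinvji : A⁻¹ j i ≠ 0 := by
    have : A⁻¹ j i = (L⁻¹ * A) i j * L⁻¹ i i := by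
      rw [hAinv, Matrix.mul_apply]
      exact Finset.sum_eq_single i
        (fun m _ hm => by rw [Matrix.transpose_apply, hzero m hm, zero_mul])
        (fun h => absurd (Finset.mem_univ i) h)
    rw [this]
    exact mul_ne_zero hi (hLinvdiag i)
  -- the permuted matrix B and its inverse are lower triangular
  set B : Matrix (Fin p) (Fin p) ℝ := A.submatrix σ σ with hB
  have hBblk : B.BlockTriangular OrderDual.toDual := fun a b hab => htri a b hab
  haveI : Invertible B := B.invertibleOfIsUnitDet
    (by rw [Matrix.isUnit_iff_isUnit_det] at hA
        simpa [hB, Matrix.det_submatrix_equiv_self] using hA)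
  have hBinvblk : B⁻¹.BlockTriangular OrderDual.toDual :=
    blockTriangular_inv_of_blockTriangular hBblk
  have hBinv : B⁻¹ = A⁻¹.submatrix σ σ := Matrix.inv_submatrix_equiv A σ σ
  -- conclude i = j
  have hij : i = j := by
    have h1 : ¬ (σ.symm i < σ.symm j) := by
      intro h
      apply hAij
      have := hBblk (i := σ.symm i) (j := σ.symm j) h
      simpa [hB] using this
    have h2 : ¬ (σ.symm j < σ.symm i) := by
      intro h
      apply hAinvji
      have := hBinvblk (i := σ.symm j) (j := σ.symm i) h
      simpa [hBinv] using this
    have := le_antisymm (not_lt.mp h2) (not_lt.mp h1)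
    simpa using congrArg σ this
  subst hij
  exact ⟨hi, hzero⟩
end

section
/- Let L be an invertible lower triangular real p×p matrix and let A be a real p×p matrix such that P A Pᵀ is lower triangular for some permutation matrix P. Assume L Lᵀ = A Aᵀ. If the k-th column of L is proportional to the j-th column of A, that is, L e_k = c · (A e_j) for some nonzero real c, then k = j. -/
/-!
Since `L` is lower triangular and the diagonal of the permuted triangular matrix `A` is nonzero,
`L j k = c * A j j ≠ 0` forces `k ≤ j`. For the reverse inequality pass to inverse transposes:
`Lᵀ⁻¹ = (L * Lᵀ)⁻¹ * L` and `Aᵀ⁻¹ = (A * Aᵀ)⁻¹ * A`, so the `k`-th column of the upper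
triangular `Lᵀ⁻¹` is `c` times the `j`-th column of `Aᵀ⁻¹`. Its `j`-th entry is `c * A⁻¹ j j`,
nonzero because `A⁻¹` is again a permuted lower triangular matrix; hence `j ≤ k`.
-/

open Matrix

namespace Matrix

theorem BlockTriangular.le_of_apply_ne_zero {n R α : Type*} [LinearOrder α] [Zero R]
    {M : Matrix n n R} {b : n → α} (hM : M.BlockTriangular b) {i j : n} (h : M i j ≠ 0) :
    b i ≤ b j :=
  not_lt.mp fun hlt => h (hM hlt)

variable {n R : Type*} [Fintype n] [DecidableEq n] [CommRing R]

/-- Unlike `blockTriangular_inv_of_blockTriangular`, no invertibility is needed: a singular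
matrix has `M⁻¹ = 0`. -/
theorem BlockTriangular.nonsing_inv {α : Type*} [LinearOrder α] {M : Matrix n n R}
    {b : n → α} (hM : M.BlockTriangular b) : M⁻¹.BlockTriangular b := by
  by_cases hdet : IsUnit M.det
  · have := M.invertibleOfIsUnitDet hdet
    exact blockTriangular_inv_of_blockTriangular hM
  · rw [nonsing_inv_apply_not_isUnit M hdet]
    exact blockTriangular_zero

theorem transpose_nonsing_inv_eq_mul_transpose_inv_mul {M : Matrix n n R} (hM : IsUnit M.det) :
    Mᵀ⁻¹ = (M * Mᵀ)⁻¹ * M := by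
  rw [mul_inv_rev, Matrix.mul_assoc, nonsing_inv_mul M hM, Matrix.mul_one]

theorem isUnit_det_of_mul_transpose_eq {L A : Matrix n n R} (hLA : L * Lᵀ = A * Aᵀ)
    (hL : IsUnit L.det) : IsUnit A.det := by
  have hdet : L.det * L.det = A.det * A.det := by
    simpa only [det_mul, det_transpose] using congrArg det hLA
  exact isUnit_of_mul_isUnit_left (hdet ▸ hL.mul hL)

theorem transpose_nonsing_inv_apply_eq_of_mul_transpose_eq {L A : Matrix n n R}
    (hLA : L * Lᵀ = A * Aᵀ) (hL : IsUnit L.det) {k j : n} {c : R}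
    (hcol : ∀ i, L i k = c * A i j) (i : n) : Lᵀ⁻¹ i k = c * Aᵀ⁻¹ i j := by
  rw [transpose_nonsing_inv_eq_mul_transpose_inv_mul hL,
    transpose_nonsing_inv_eq_mul_transpose_inv_mul (isUnit_det_of_mul_transpose_eq hLA hL),
    hLA, mul_apply, mul_apply, Finset.mul_sum]
  simp only [hcol, mul_left_comm]

variable [LinearOrder n]

theorem IsLowerTriangular.isUnit_apply_self {M : Matrix n n R} (hM : M.IsLowerTriangular)
    (hdet : IsUnit M.det) (i : n) : IsUnit (M i i) := by
  rw [det_of_isLowerTriangular M hM, IsUnit.prod_univ_iff] at hdet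
  exact hdet i

theorem isUnit_apply_self_of_isLowerTriangular_submatrix {M : Matrix n n R}
    {σ : Equiv.Perm n} (hM : (M.submatrix σ σ).IsLowerTriangular) (hdet : IsUnit M.det)
    (i : n) : IsUnit (M i i) := by
  rw [← det_submatrix_equiv_self σ] at hdet
  simpa using hM.isUnit_apply_self hdet (σ.symm i)

theorem isUnit_inv_apply_self_of_isLowerTriangular_submatrix {M : Matrix n n R}
    {σ : Equiv.Perm n} (hM : (M.submatrix σ σ).IsLowerTriangular) (hdet : IsUnit M.det)
    (i : n) : IsUnit (M⁻¹ i i) := by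
  have hMinv : (M⁻¹.submatrix σ σ).IsLowerTriangular := by
    rw [← inv_submatrix_equiv]
    exact hM.nonsing_inv
  exact isUnit_apply_self_of_isLowerTriangular_submatrix hMinv (isUnit_nonsing_inv_det M hdet) i

end Matrix

/-- Auxiliary lemma (Janzing–Schkoda) used in the second proof of Lemma C.1 of
the paper: if `L` is invertible lower triangular, `A` becomes lower triangular
after permuting rows and columns by `σ`, `L Lᵀ = A Aᵀ`, and the `k`-th column of
`L` equals `c` times the `j`-th column of `A` for some `c ≠ 0`, then `k = j`. -/
theorem proportional_columns_same_index
    {p : ℕ} (L A : Matrix (Fin p) (Fin p) ℝ)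
    (hL : IsUnit L)
    (hLtri : ∀ i j : Fin p, i < j → L i j = 0)
    (σ : Equiv.Perm (Fin p))
    (htri : ∀ i j : Fin p, i < j → A (σ i) (σ j) = 0)
    (hLL : L * Lᵀ = A * Aᵀ)
    (k j : Fin p) (c : ℝ) (hc : c ≠ 0)
    (hcol : ∀ i : Fin p, L i k = c * A i j) :
    k = j := by
  have hLdet : IsUnit L.det := (isUnit_iff_isUnit_det L).mp hL
  have hAdet : IsUnit A.det := isUnit_det_of_mul_transpose_eq hLL hLdet
  have hLlower : L.IsLowerTriangular := fun i j h => hLtri i j h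
  have hAlower : (A.submatrix σ σ).IsLowerTriangular := fun i j h => htri i j h
  have hkj : OrderDual.toDual j ≤ OrderDual.toDual k := hLlower.le_of_apply_ne_zero <| by
    rw [hcol j]
    exact mul_ne_zero hc
      (isUnit_apply_self_of_isLowerTriangular_submatrix hAlower hAdet j).ne_zero
  have hLinvUpper : Lᵀ⁻¹.IsUpperTriangular := hLlower.transpose.nonsing_inv
  have hjk : j ≤ k := hLinvUpper.le_of_apply_ne_zero <| by
    rw [transpose_nonsing_inv_apply_eq_of_mul_transpose_eq hLL hLdet hcol j,
      ← transpose_nonsing_inv, transpose_apply]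
    exact mul_ne_zero hc
      (isUnit_inv_apply_self_of_isLowerTriangular_submatrix hAlower hAdet j).ne_zero
  exact le_antisymm (OrderDual.toDual_le_toDual.mp hkj) hjk
end

section
/- Let A be an invertible real p×p matrix such that P A Pᵀ is lower triangular for some permutation matrix P, and let L be a lower triangular matrix with strictly positive diagonal entries satisfying L Lᵀ = A Aᵀ. Fix an index j. If either A_{kj} ≠ 0 for some k < j, or (A⁻¹)_{jk} ≠ 0 for some k > j, then the j-th column of L⁻¹ A has at least two nonzero entries. -/
/-!
Write `A = L Q` with `Q = L⁻¹ A`. Since `L Lᵀ = A Aᵀ`, the matrix `Q` is orthogonal, so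
`A⁻¹ = Qᵀ L⁻¹`. If column `j` of `Q` were supported on a single row `i`, then column `j` of
`A` would be a multiple of column `i` of `L`, and row `j` of `A⁻¹` a multiple of row `i` of `L⁻¹`.
The diagonal entries `A j j` and `A⁻¹ j j` do not vanish, because `A` is triangular up to a
simultaneous permutation of rows and columns; triangularity of `L` and `L⁻¹` then forces `i = j`,
so `A` has no nonzero entry above the diagonal in column `j`, and `A⁻¹` none to the right of the
diagonal in row `j`.
-/

open Matrix

namespace Matrix

section Triangular

variable {n R : Type*} [Fintype n] [LinearOrder n] [CommRing R]

theorem IsLowerTriangular.inv [DecidableEq n] {M : Matrix n n R} (hM : M.IsLowerTriangular) :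
    M⁻¹.IsLowerTriangular := by
  by_cases hdet : IsUnit M.det
  · have := invertibleOfIsUnitDet M hdet
    exact blockTriangular_inv_of_blockTriangular hM
  · rw [nonsing_inv_apply_not_isUnit M hdet]
    exact blockTriangular_zero

theorem IsLowerTriangular.mul_apply_self_s9 {M N : Matrix n n R} (hM : M.IsLowerTriangular)
    (hN : N.IsLowerTriangular) (i : n) : (M * N) i i = M i i * N i i := by
  refine Fintype.sum_eq_single i fun k hk => ?_
  rcases hk.lt_or_gt with hki | hik
  · simp only [hN hki, mul_zero]
  · simp only [hM hik, zero_mul]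

theorem IsLowerTriangular.isUnit_det {M : Matrix n n R} (hM : M.IsLowerTriangular)
    (hdiag : ∀ i, IsUnit (M i i)) : IsUnit M.det := by
  rw [det_of_isLowerTriangular M hM]
  exact IsUnit.prod_iff.2 fun i _ => hdiag i

theorem apply_self_mul_inv_apply_self_of_isLowerTriangular_submatrix [DecidableEq n]
    {A : Matrix n n R} (hA : IsUnit A) (σ : Equiv.Perm n) (htri : (A.submatrix σ σ).IsLowerTriangular) (j : n) :
    A j j * A⁻¹ j j = 1 := by
  have hB : IsUnit (A.submatrix σ σ).det := (isUnit_iff_isUnit_det _).1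
    ((isUnit_submatrix_equiv σ σ).2 hA)
  have h := htri.mul_apply_self_s9 htri.inv (σ.symm j)
  rw [mul_nonsing_inv _ hB, inv_submatrix_equiv] at h
  simpa using h.symm

end Triangular

section Orthogonal

variable {n R : Type*} [Fintype n] [DecidableEq n] [CommRing R]

theorem transpose_mul_self_eq_one_of_mul_transpose_eq {A L : Matrix n n R} (hL : IsUnit L.det)
    (hLA : L * Lᵀ = A * Aᵀ) : (L⁻¹ * A)ᵀ * (L⁻¹ * A) = 1 := by
  have hLt : IsUnit Lᵀ.det := by rwa [det_transpose]
  refine mul_eq_one_comm.1 ?_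
  calc L⁻¹ * A * (L⁻¹ * A)ᵀ = L⁻¹ * (A * Aᵀ) * Lᵀ⁻¹ := by
        rw [transpose_mul, transpose_nonsing_inv]; simp only [Matrix.mul_assoc]
    _ = 1 := by
        rw [← hLA, ← Matrix.mul_assoc, nonsing_inv_mul L hL, Matrix.one_mul,
          mul_nonsing_inv Lᵀ hLt]

theorem inv_eq_transpose_mul_inv_of_mul_transpose_eq {A L : Matrix n n R} (hL : IsUnit L.det)
    (hLA : L * Lᵀ = A * Aᵀ) : A⁻¹ = (L⁻¹ * A)ᵀ * L⁻¹ :=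
  inv_eq_left_inv <| by
    rw [Matrix.mul_assoc]
    exact transpose_mul_self_eq_one_of_mul_transpose_eq hL hLA

end Orthogonal

section SingleEntryColumn

variable {n R : Type*} [Fintype n] [NonUnitalNonAssocSemiring R] {M N : Matrix n n R} {i j : n}

theorem mul_apply_of_forall_ne_apply_eq_zero (hN : ∀ m, m ≠ i → N m j = 0) (k : n) :
    (M * N) k j = M k i * N i j :=
  Fintype.sum_eq_single i fun m hm => by simp only [hN m hm, mul_zero]

theorem transpose_mul_apply_of_forall_ne_apply_eq_zero (hN : ∀ m, m ≠ i → N m j = 0) (k : n) :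
    (Nᵀ * M) j k = N i j * M i k :=
  Fintype.sum_eq_single i fun m hm => by simp only [transpose_apply, hN m hm, zero_mul]

end SingleEntryColumn

end Matrix

/-- Necessity part of Lemma D.2 ('OneNoneZeroWRTA') of the paper.  `A` is
invertible and becomes lower triangular after permuting rows and columns by
`σ`; `L` is the lower triangular Cholesky factor (with positive diagonal) of
`A Aᵀ`.  If `A k j ≠ 0` for some `k < j`, or `(A⁻¹) j k ≠ 0` for some `k > j`,
then the `j`-th column of `L⁻¹ A` has at least two nonzero entries. -/
theorem column_two_nonzero_of_conditions_fail
    {p : ℕ} (A L : Matrix (Fin p) (Fin p) ℝ)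
    (hA : IsUnit A)
    (σ : Equiv.Perm (Fin p))
    (htri : ∀ i j : Fin p, i < j → A (σ i) (σ j) = 0)
    (hLtri : ∀ i j : Fin p, i < j → L i j = 0)
    (hLdiag : ∀ i : Fin p, 0 < L i i)
    (hLL : L * Lᵀ = A * Aᵀ)
    (j : Fin p)
    (h : (∃ k : Fin p, k < j ∧ A k j ≠ 0) ∨ (∃ k : Fin p, j < k ∧ A⁻¹ j k ≠ 0)) :
    ∃ i₁ i₂ : Fin p, i₁ ≠ i₂ ∧ (L⁻¹ * A) i₁ j ≠ 0 ∧ (L⁻¹ * A) i₂ j ≠ 0 := by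
  have hL : L.IsLowerTriangular := fun _ _ => hLtri _ _
  have hLdet : IsUnit L.det := hL.isUnit_det fun i => (hLdiag i).ne'.isUnit
  set Q := L⁻¹ * A
  have hLQ : L * Q = A := mul_nonsing_inv_cancel_left L A hLdet
  have hAinv : A⁻¹ = Qᵀ * L⁻¹ := inv_eq_transpose_mul_inv_of_mul_transpose_eq hLdet hLL
  have hdiag : A j j * A⁻¹ j j = 1 :=
    apply_self_mul_inv_apply_self_of_isLowerTriangular_submatrix hA σ (fun _ _ => htri _ _) j
  by_contra! hcon
  have hLQjj : (L * Q) j j ≠ 0 := hLQ ▸ left_ne_zero_of_mul_eq_one hdiag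
  obtain ⟨i, -, hi⟩ : ∃ i ∈ Finset.univ, L j i * Q i j ≠ 0 :=
    Finset.exists_ne_zero_of_sum_ne_zero hLQjj
  have hsupp : ∀ m, m ≠ i → Q m j = 0 := fun m hm =>
    hcon i m hm.symm (right_ne_zero_of_mul hi)
  have hcol (k : Fin p) : A k j = L k i * Q i j :=
    hLQ ▸ mul_apply_of_forall_ne_apply_eq_zero hsupp k
  have hrow (k : Fin p) : A⁻¹ j k = Q i j * L⁻¹ i k :=
    hAinv ▸ transpose_mul_apply_of_forall_ne_apply_eq_zero hsupp k
  obtain rfl : i = j := le_antisymm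
    (not_lt.1 fun hji => left_ne_zero_of_mul_eq_one hdiag (by rw [hcol, hL hji, zero_mul]))
    (not_lt.1 fun hij => right_ne_zero_of_mul_eq_one hdiag (by rw [hrow, hL.inv hij, mul_zero]))
  rcases h with ⟨k, hkj, hAkj⟩ | ⟨k, hjk, hAjk⟩
  · exact hAkj (by rw [hcol, hL hkj, zero_mul])
  · exact hAjk (by rw [hrow, hL.inv hjk, mul_zero])
end

section
/- Let p ≥ 2, let U = (U_1, …, U_p) be a random vector whose coordinates are square-integrable real random variables with mean 0 and variance at most 1, and let v ∈ ℝ^p be a fixed vector with at least two nonzero coordinates. For δ ∈ ℝ set W(δ) = U + δ·v, and let m₁(δ) and m₂(δ) denote respectively the largest and the second largest of the values |W(δ)_1|, …, |W(δ)_p| (the top two entries, with multiplicity, of the absolute values sorted in decreasing order). Then there exists a constant C > 0, depending only on p and v, such that P( m₁(δ) < C · m₂(δ) ) tends to 1 as δ → ∞. -/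
open MeasureTheory Filter

/-- The largest of the values `w 1, …, w p` (`p ≥ 2`). -/
noncomputable def firstLargest {p : ℕ} (hp : 2 ≤ p) (w : Fin p → ℝ) : ℝ :=
  Finset.univ.sup'
    (Finset.univ_nonempty_iff.mpr ⟨⟨0, by omega⟩⟩) w

/-- The second largest (with multiplicity) of the values `w 1, …, w p`
(`p ≥ 2`): the minimum over `i` of the maximum of `w` over the remaining
indices. -/
noncomputable def secondLargest {p : ℕ} (hp : 2 ≤ p) (w : Fin p → ℝ) : ℝ :=
  Finset.univ.inf'
    (Finset.univ_nonempty_iff.mpr ⟨⟨0, by omega⟩⟩)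
    fun i =>
      (Finset.univ.erase i).sup'
        (by
          rw [← Finset.card_pos, Finset.card_erase_of_mem (Finset.mem_univ i),
            Finset.card_fin]
          omega) w

open scoped ENNReal

lemma firstLargest_le {p : ℕ} (hp : 2 ≤ p) (w : Fin p → ℝ) (c : ℝ)
    (h : ∀ i, w i ≤ c) : firstLargest hp w ≤ c :=
  Finset.sup'_le _ _ fun i _ => h i

lemma le_secondLargest {p : ℕ} (hp : 2 ≤ p) (w : Fin p → ℝ) (c : ℝ)
    (h : ∀ k : Fin p, ∃ l, l ≠ k ∧ c ≤ w l) : c ≤ secondLargest hp w := by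
  refine Finset.le_inf' _ _ fun k _ => ?_
  obtain ⟨l, hlk, hc⟩ := h k
  exact Finset.le_sup'_of_le _ (Finset.mem_erase.mpr ⟨hlk, Finset.mem_univ l⟩) hc

lemma pointwise_bound {p : ℕ} (hp : 2 ≤ p) (v u : Fin p → ℝ) (a M δ : ℝ)
    (ha : 0 < a) (hδ : 0 < δ)
    (hM : ∀ i, |v i| ≤ M)
    (hsec : ∀ k : Fin p, ∃ l, l ≠ k ∧ a ≤ |v l|)
    (hu : ∀ i, |u i| ≤ δ * a / 4) :
    firstLargest hp (fun i => |u i + δ * v i|) <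
      ((4 * M + a) / (3 * a) + 1) * secondLargest hp (fun i => |u i + δ * v i|) := by
  have haM : a ≤ M := by
    obtain ⟨l, _, hl⟩ := hsec ⟨0, by omega⟩
    exact hl.trans (hM l)
  have hF : firstLargest hp (fun i => |u i + δ * v i|) ≤ δ * a / 4 + δ * M := by
    refine firstLargest_le _ _ _ fun i => ?_
    calc |u i + δ * v i| ≤ |u i| + |δ * v i| := abs_add_le _ _
      _ ≤ δ * a / 4 + δ * M := by
          have := hM i
          have := hu i
          rw [abs_mul, abs_of_pos hδ]
          nlinarith
  have hS : 3 * (δ * a) / 4 ≤ secondLargest hp (fun i => |u i + δ * v i|) := by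
    refine le_secondLargest _ _ _ fun k => ?_
    obtain ⟨l, hlk, hl⟩ := hsec k
    refine ⟨l, hlk, ?_⟩
    have h1 : δ * a ≤ |δ * v l| := by
      rw [abs_mul, abs_of_pos hδ]; nlinarith
    have h2 := hu l
    have := abs_sub_abs_le_abs_sub (δ * v l) (-(u l))
    simp only [abs_neg, sub_neg_eq_add] at this
    calc 3 * (δ * a) / 4 ≤ |δ * v l| - |u l| := by nlinarith
      _ ≤ |δ * v l + u l| := this
      _ = |u l + δ * v l| := by rw [add_comm]
  calc firstLargest hp (fun i => |u i + δ * v i|) ≤ δ * a / 4 + δ * M := hF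
    _ < ((4 * M + a) / (3 * a) + 1) * (3 * (δ * a) / 4) := by
        have key : ((4 * M + a) / (3 * a) + 1) * (3 * (δ * a) / 4)
            = (4 * M + a) * δ / 4 + 3 * (δ * a) / 4 := by
          field_simp
        rw [key]; nlinarith
    _ ≤ ((4 * M + a) / (3 * a) + 1) * secondLargest hp (fun i => |u i + δ * v i|) := by
        have hM0 : (0:ℝ) < M := ha.trans_le haM
        have hC : (0:ℝ) < (4 * M + a) / (3 * a) + 1 := by positivity
        exact mul_le_mul_of_nonneg_left hS hC.le

/-- Lemma D.4 ('resOfInsufficientPi') of the paper: if `v` has at least two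
nonzero coordinates, there is a constant `C > 0`, depending only on `p` and
`v`, such that for any random vector `U` with square-integrable coordinates of
mean `0` and variance at most `1`, writing `W(δ) = U + δ v`, the largest
absolute coordinate of `W(δ)` is less than `C` times the second largest one
with probability tending to `1` as `δ → ∞`. -/
theorem gap_ratio_bounded_of_two_nonzero
    {p : ℕ} (hp : 2 ≤ p) (v : Fin p → ℝ)
    (hv : ∃ i j : Fin p, i ≠ j ∧ v i ≠ 0 ∧ v j ≠ 0) :
    ∃ C : ℝ, 0 < C ∧
      ∀ {Ω : Type*} [MeasurableSpace Ω] (μ : Measure Ω) [IsProbabilityMeasure μ]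
        (U : Fin p → Ω → ℝ),
        (∀ i, MemLp (U i) 2 μ) →
        (∀ i, ∫ ω, U i ω ∂μ = 0) →
        (∀ i, ∫ ω, (U i ω) ^ 2 ∂μ ≤ 1) →
        Tendsto (fun δ : ℝ =>
            μ {ω | firstLargest hp (fun i => |U i ω + δ * v i|) <
                C * secondLargest hp (fun i => |U i ω + δ * v i|)})
          atTop (nhds 1) := by
  obtain ⟨i0, j0, hij, hvi, hvj⟩ := hv
  set a : ℝ := secondLargest hp (fun i => |v i|) with ha_def
  set M : ℝ := firstLargest hp (fun i => |v i|) with hM_def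
  have hM : ∀ i, |v i| ≤ M := by
    intro i
    rw [hM_def, firstLargest]
    exact Finset.le_sup' (fun i => |v i|) (Finset.mem_univ i)
  have hsec : ∀ k : Fin p, ∃ l, l ≠ k ∧ a ≤ |v l| := by
    intro k
    have hk : a ≤ (Finset.univ.erase k).sup'
        (by rw [← Finset.card_pos, Finset.card_erase_of_mem (Finset.mem_univ k),
              Finset.card_fin]; omega) (fun i => |v i|) :=
      by rw [ha_def, secondLargest]; exact Finset.inf'_le _ (Finset.mem_univ k)
    obtain ⟨l, hl, hle⟩ := Finset.exists_mem_eq_sup' (s := Finset.univ.erase k)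
      (by rw [← Finset.card_pos, Finset.card_erase_of_mem (Finset.mem_univ k),
            Finset.card_fin]; omega) (fun i => |v i|)
    exact ⟨l, (Finset.mem_erase.mp hl).1, le_of_le_of_eq hk hle⟩
  have ha : 0 < a := by
    have hmin : 0 < min |v i0| |v j0| := lt_min (abs_pos.mpr hvi) (abs_pos.mpr hvj)
    refine lt_of_lt_of_le hmin ?_
    rw [ha_def]
    refine le_secondLargest hp _ _ fun k => ?_
    rcases eq_or_ne i0 k with rfl | h
    · exact ⟨j0, fun h' => hij h'.symm, (min_le_right _ _)⟩
    · exact ⟨i0, h, (min_le_left _ _)⟩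
  have hM0 : (0:ℝ) < M := by
    obtain ⟨l, _, hl⟩ := hsec i0
    exact ha.trans_le (hl.trans (hM l))
  refine ⟨(4 * M + a) / (3 * a) + 1, by positivity, ?_⟩
  intro Ω _ μ _ U hU2 hmean hvar
  -- variance bound
  have hvarle : ∀ i, ProbabilityTheory.variance (U i) μ ≤ 1 := by
    intro i
    rw [ProbabilityTheory.variance_eq_sub (hU2 i)]
    have h1 : (∫ ω, ((U i) ^ 2) ω ∂μ) = ∫ ω, (U i ω) ^ 2 ∂μ := by simp
    rw [h1, hmean i]
    simpa using hvar i
  set B : ℝ → ℝ≥0∞ := fun δ => p * ENNReal.ofReal (1 / (δ * a / 4) ^ 2) with hB_def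
  have hBtend : Tendsto B atTop (nhds 0) := by
    have h1 : Tendsto (fun δ : ℝ => δ * a / 4) atTop atTop := by
      apply Tendsto.atTop_div_const (by norm_num)
      exact Tendsto.atTop_mul_const ha tendsto_id
    have h2 : Tendsto (fun δ : ℝ => 1 / (δ * a / 4) ^ 2) atTop (nhds 0) := by
      simp only [one_div]
      exact tendsto_inv_atTop_zero.comp ((tendsto_pow_atTop two_ne_zero).comp h1)
    have h3 : Tendsto (fun δ : ℝ => ENNReal.ofReal (1 / (δ * a / 4) ^ 2)) atTop
        (nhds 0) := by
      simpa [Function.comp_def] using (ENNReal.continuous_ofReal.tendsto 0).comp h2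
    have h4 := ENNReal.Tendsto.const_mul h3 (Or.inr (ENNReal.natCast_ne_top p))
    rw [mul_zero] at h4
    simpa [hB_def, one_div] using h4
  have key : ∀ δ : ℝ, 0 < δ →
      (1 : ℝ≥0∞) - B δ ≤ μ {ω | firstLargest hp (fun i => |U i ω + δ * v i|) <
        ((4 * M + a) / (3 * a) + 1) * secondLargest hp (fun i => |U i ω + δ * v i|)} := by
    intro δ hδ
    set c : ℝ := δ * a / 4 with hc_def
    have hc : 0 < c := by positivity
    set good : Set Ω := {ω | ∀ i, |U i ω| ≤ c} with hgood_def
    have hsub : good ⊆ {ω | firstLargest hp (fun i => |U i ω + δ * v i|) <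
        ((4 * M + a) / (3 * a) + 1) * secondLargest hp (fun i => |U i ω + δ * v i|)} := by
      intro ω hω
      exact pointwise_bound hp v (fun i => U i ω) a M δ ha hδ hM hsec hω
    have hcompl : μ goodᶜ ≤ B δ := by
      have hsubc : goodᶜ ⊆ ⋃ i : Fin p, {ω | c ≤ |U i ω|} := by
        intro ω hω
        simp only [hgood_def, Set.mem_compl_iff, Set.mem_setOf_eq, not_forall] at hω
        obtain ⟨i, hi⟩ := hω
        exact Set.mem_iUnion.mpr ⟨i, (not_le.mp hi).le⟩
      calc μ goodᶜ ≤ μ (⋃ i : Fin p, {ω | c ≤ |U i ω|}) := measure_mono hsubc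
        _ ≤ ∑ i : Fin p, μ {ω | c ≤ |U i ω|} := measure_iUnion_fintype_le _ _
        _ ≤ ∑ _i : Fin p, ENNReal.ofReal (1 / c ^ 2) := by
            refine Finset.sum_le_sum fun i _ => ?_
            have hcheb := ProbabilityTheory.meas_ge_le_variance_div_sq (hU2 i) hc
            rw [hmean i] at hcheb
            simp only [sub_zero] at hcheb
            refine hcheb.trans (ENNReal.ofReal_le_ofReal ?_)
            rw [div_le_div_iff₀ (by positivity) (by positivity)]
            nlinarith [hvarle i, hc]
        _ = B δ := by
            rw [Finset.sum_const, Finset.card_univ, Fintype.card_fin, nsmul_eq_mul, hB_def]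
    have h1le : (1 : ℝ≥0∞) ≤ μ {ω | firstLargest hp (fun i => |U i ω + δ * v i|) <
        ((4 * M + a) / (3 * a) + 1) * secondLargest hp (fun i => |U i ω + δ * v i|)} + B δ := by
      calc (1 : ℝ≥0∞) = μ Set.univ := (measure_univ).symm
        _ = μ (good ∪ goodᶜ) := by rw [Set.union_compl_self]
        _ ≤ μ good + μ goodᶜ := measure_union_le _ _
        _ ≤ _ := add_le_add (measure_mono hsub) hcompl
    exact tsub_le_iff_right.mpr h1le
  have hg : Tendsto (fun δ : ℝ => (1 : ℝ≥0∞) - B δ) atTop (nhds 1) := by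
    have := ENNReal.Tendsto.sub (tendsto_const_nhds (x := (1:ℝ≥0∞))) hBtend
      (Or.inl ENNReal.one_ne_top)
    simpa using this
  refine tendsto_of_tendsto_of_tendsto_of_le_of_le' hg tendsto_const_nhds ?_ ?_
  · filter_upwards [eventually_gt_atTop 0] with δ hδ
    exact key δ hδ
  · filter_upwards with δ
    exact prob_le_one
end

section
/- Let p ≥ 1, let W = (W_1, …, W_p) be a random vector whose coordinates are square-integrable real random variables with mean 0 and variance 1, let R and S be disjoint sets of indices with R nonempty, and for each j ∈ R let α_j be a nonzero real and σ_j > 0. Then P( min_{j ∈ R} (W_j + δ·α_j/σ_j)² > max_{k ∈ S} (W_k)² ) tends to 1 as δ → ∞ (with the convention that the maximum over an empty S is 0). -/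
open MeasureTheory Filter

/-- Population-level separation from the proof of Theorem 4 of the paper: the
squared z-scores of the shifted variables (indices `j ∈ R`, which receive a
mean shift `δ α_j / σ_j` with `α_j ≠ 0`) eventually all exceed the squared
z-scores of the unaffected variables (indices `k ∈ S`) with probability tending
to `1` as `δ → ∞`.  The maximum over an empty `S` is `0` by convention. -/
theorem shifted_min_exceeds_unshifted_max
    {Ω : Type*} [MeasurableSpace Ω] (μ : Measure Ω) [IsProbabilityMeasure μ]
    {p : ℕ} (hp : 1 ≤ p) (W : Fin p → Ω → ℝ)
    (hW2 : ∀ i, MemLp (W i) 2 μ)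
    (hW0 : ∀ i, ∫ ω, W i ω ∂μ = 0)
    (hWvar : ∀ i, ∫ ω, (W i ω) ^ 2 ∂μ = 1)
    (R S : Finset (Fin p)) (hRS : Disjoint R S) (hR : R.Nonempty)
    (α σ : Fin p → ℝ)
    (hα : ∀ j ∈ R, α j ≠ 0) (hσ : ∀ j ∈ R, 0 < σ j) :
    Tendsto (fun δ : ℝ =>
        μ {ω |
          (if h : S.Nonempty then S.sup' h (fun k => (W k ω) ^ 2) else 0) <
            R.inf' hR (fun j => (W j ω + δ * α j / σ j) ^ 2)})
      atTop (nhds 1) := by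
  -- Chebyshev-type tail bound for each coordinate
  have cheb : ∀ (i : Fin p) (M : ℝ), 0 < M →
      (μ {ω | M ^ 2 ≤ (W i ω) ^ 2}).toReal ≤ 1 / M ^ 2 := by
    intro i M hM
    have h := mul_meas_ge_le_integral_of_nonneg (μ := μ)
      (f := fun ω => (W i ω) ^ 2) (ae_of_all _ fun ω => sq_nonneg _)
      ((hW2 i).integrable_sq) (M ^ 2)
    rw [hWvar i] at h
    rw [le_div_iff₀ (by positivity)]
    rw [measureReal_def] at h
    linarith [h]
  rw [tendsto_order]
  constructor
  · -- lower bound:  a < 1 implies eventually a < μ (E δ)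
    intro a ha
    have haT : a ≠ ⊤ := ha.ne_top
    have har : a.toReal < 1 := by
      have := ENNReal.toReal_lt_toReal haT (by simp : (1 : ENNReal) ≠ ⊤)
      simpa using this.2 ha
    set r : ℝ := a.toReal with hr
    set M : ℝ := max 1 (Real.sqrt (2 * p / (1 - r))) with hM
    have hM1 : (1 : ℝ) ≤ M := le_max_left _ _
    have hM0 : (0 : ℝ) < M := lt_of_lt_of_le one_pos hM1
    have hMsq : 2 * p / (1 - r) ≤ M ^ 2 := by
      have h1 : Real.sqrt (2 * p / (1 - r)) ≤ M := le_max_right _ _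
      have h2 : 0 ≤ 2 * p / (1 - r) := div_nonneg (by positivity) (by linarith)
      calc 2 * p / (1 - r) = Real.sqrt (2 * p / (1 - r)) ^ 2 := (Real.sq_sqrt h2).symm
        _ ≤ M ^ 2 := by
            apply pow_le_pow_left₀ (Real.sqrt_nonneg _) h1
    have hpM : (p : ℝ) / M ^ 2 ≤ (1 - r) / 2 := by
      rw [div_le_div_iff₀ (by positivity) (by norm_num)]
      have h2 : (2 * p / (1 - r)) * (1 - r) = 2 * p :=
        div_mul_cancel₀ _ (by intro h; linarith : (1:ℝ) - r ≠ 0)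
      nlinarith [mul_le_mul_of_nonneg_right hMsq (by linarith : (0:ℝ) ≤ 1 - r)]
    -- the good set A
    set A : Set Ω := {ω | ∀ i, |W i ω| ≤ M} with hA
    -- measure of A is at least 1 - p/M²
    have hAc : Aᶜ ⊆ ⋃ i : Fin p, {ω | M ^ 2 ≤ (W i ω) ^ 2} := by
      intro ω hω
      simp only [hA, Set.mem_compl_iff, Set.mem_setOf_eq, not_forall] at hω
      obtain ⟨i, hi⟩ := hω
      refine Set.mem_iUnion.2 ⟨i, ?_⟩
      have : M ≤ |W i ω| := le_of_not_ge hi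
      calc M ^ 2 ≤ |W i ω| ^ 2 := pow_le_pow_left₀ hM0.le this 2
        _ = (W i ω) ^ 2 := sq_abs _
    have hAcmeas : (μ Aᶜ).toReal ≤ (p : ℝ) / M ^ 2 := by
      have h1 : μ Aᶜ ≤ ∑ i : Fin p, μ {ω | M ^ 2 ≤ (W i ω) ^ 2} :=
        (measure_mono hAc).trans (measure_iUnion_fintype_le _ _)
      have h2 : (μ Aᶜ).toReal ≤ ∑ i : Fin p, (μ {ω | M ^ 2 ≤ (W i ω) ^ 2}).toReal := by
        rw [← ENNReal.toReal_sum (fun i _ => measure_ne_top μ _)]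
        exact ENNReal.toReal_mono (ENNReal.sum_ne_top.2 fun i _ => measure_ne_top μ _) h1
      calc (μ Aᶜ).toReal ≤ ∑ i : Fin p, (μ {ω | M ^ 2 ≤ (W i ω) ^ 2}).toReal := h2
        _ ≤ ∑ _i : Fin p, 1 / M ^ 2 := Finset.sum_le_sum fun i _ => cheb i M hM0
        _ = (p : ℝ) / M ^ 2 := by simp [div_eq_mul_inv, mul_comm]
    have hAmeas : 1 - (p : ℝ) / M ^ 2 ≤ (μ A).toReal := by
      have huniv : (1 : ENNReal) ≤ μ A + μ Aᶜ := by
        rw [← measure_univ (μ := μ), ← Set.union_compl_self A]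
        exact measure_union_le _ _
      have h1 : (1 : ℝ) ≤ (μ A).toReal + (μ Aᶜ).toReal := by
        have := ENNReal.toReal_mono
          (by exact ENNReal.add_ne_top.2 ⟨measure_ne_top μ _, measure_ne_top μ _⟩) huniv
        rwa [ENNReal.toReal_add (measure_ne_top μ _) (measure_ne_top μ _), ENNReal.toReal_one]
          at this
      linarith
    -- eventual condition on δ
    have hev : ∀ᶠ δ : ℝ in atTop, ∀ j ∈ R, 2 * M < |δ * α j / σ j| := by
      rw [eventually_all_finset]
      intro j hj
      have hpos : 0 < |α j| / σ j := div_pos (abs_pos.2 (hα j hj)) (hσ j hj)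
      have htend : Tendsto (fun δ : ℝ => δ * (|α j| / σ j)) atTop atTop :=
        Tendsto.atTop_mul_const hpos tendsto_id
      filter_upwards [htend.eventually_gt_atTop (2 * M), eventually_ge_atTop (0 : ℝ)]
        with δ h1 h2
      have : |δ * α j / σ j| = δ * (|α j| / σ j) := by
        rw [abs_div, abs_mul, abs_of_nonneg h2, abs_of_pos (hσ j hj), mul_div_assoc]
      rw [this]
      exact h1
    filter_upwards [hev] with δ hδ
    -- A is contained in the event
    have hsub : A ⊆ {ω |
        (if h : S.Nonempty then S.sup' h (fun k => (W k ω) ^ 2) else 0) <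
          R.inf' hR (fun j => (W j ω + δ * α j / σ j) ^ 2)} := by
      intro ω hω
      simp only [Set.mem_setOf_eq]
      rw [Finset.lt_inf'_iff]
      intro j hj
      have hM2 : M ^ 2 < (W j ω + δ * α j / σ j) ^ 2 := by
        have h1 : |δ * α j / σ j| - |W j ω| ≤ |W j ω + δ * α j / σ j| := by
          have := abs_add_le (W j ω + δ * α j / σ j) (-(W j ω))
          simp only [add_neg_cancel_comm, abs_neg] at this
          linarith
        have h2 : M < |W j ω + δ * α j / σ j| := by
          have := hδ j hj
          have := hω j
          linarith
        calc M ^ 2 < |W j ω + δ * α j / σ j| ^ 2 := by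
              apply pow_lt_pow_left₀ h2 hM0.le
              norm_num
          _ = (W j ω + δ * α j / σ j) ^ 2 := sq_abs _
      refine lt_of_le_of_lt ?_ hM2
      split_ifs with h
      · apply Finset.sup'_le
        intro k _
        calc (W k ω) ^ 2 = |W k ω| ^ 2 := (sq_abs _).symm
          _ ≤ M ^ 2 := pow_le_pow_left₀ (abs_nonneg _) (hω k) 2
      · positivity
    -- conclude
    have hle : μ A ≤ μ {ω |
        (if h : S.Nonempty then S.sup' h (fun k => (W k ω) ^ 2) else 0) <
          R.inf' hR (fun j => (W j ω + δ * α j / σ j) ^ 2)} := measure_mono hsub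
    rw [← ENNReal.toReal_lt_toReal haT (measure_ne_top μ _)]
    have h3 : (μ A).toReal ≤ (μ _).toReal := ENNReal.toReal_mono (measure_ne_top μ _) hle
    have : r < 1 - (p : ℝ) / M ^ 2 := by
      have hp0 : (0 : ℝ) < p := by exact_mod_cast hp
      linarith
    calc a.toReal = r := rfl
      _ < 1 - (p : ℝ) / M ^ 2 := this
      _ ≤ (μ A).toReal := hAmeas
      _ ≤ _ := h3
  · -- upper bound: trivial since μ is a probability measure
    intro b hb
    filter_upwards with δ
    exact lt_of_le_of_lt prob_le_one hb
end
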